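/- Let 𝒰 be a G-set universe and A a tame module over the monoid M = Inj_G(𝒰,𝒰). If A is finitely generated as an abelian group, then the M-action on A is trivial. -/

import Mathlib

/-!
Let `M₀` be the union of the filtrations of finitely many generators of `A`: a finite `G`-subset
such that every `ψ` fixing `M₀` pointwise acts trivially on all of `A`. Since `𝒰 ≅ 𝒰 ⊔ 𝒰`, with
embeddings `i₁, i₂`, the images of the maps `i₂ⁿ i₁` are pairwise disjoint, so one of them, `φ`,
has image disjoint from `M₀`. Any `χ` whose image avoids `M₀` acts trivially on `A`: extending `χ`
by the identity off its image gives `μ` fixing `M₀` with `μχ = χχ`, so `χ` acts idempotently, and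
inverting `χ` on `χ(M₀)` gives `τ` with `τχ` fixing `M₀`, so `χ` acts injectively. Applied to `φ`
and `φψ` this gives `ψ • a = φ • ψ • a = a`.
-/

/-- A `G`-set universe: a countably infinite `G`-set which is `G`-equivariantly
isomorphic to the disjoint union of two copies of itself. -/
def IsGSetUniverse (G U : Type*) [Group G] [MulAction G U] : Prop :=
  Countable U ∧ Infinite U ∧
    ∃ e : U ≃ (U ⊕ U), ∀ (g : G) (x : U),
      e (g • x) = Sum.map (fun y => g • y) (fun y => g • y) (e x)

/-- The monoid `Inj_G(𝒰,𝒰)` of `G`-equivariant injective self-maps of `U`,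
as a submonoid of `Function.End U` (composition). -/
def injGMonoid (G U : Type*) [Group G] [MulAction G U] : Submonoid (Function.End U) where
  carrier := {f | Function.Injective f ∧ ∀ (g : G) (x : U), f (g • x) = g • f x}
  one_mem' := ⟨fun _ _ h => h, fun _ _ => rfl⟩
  mul_mem' := by
    rintro f₁ f₂ ⟨h1, h2⟩ ⟨h3, h4⟩
    refine ⟨h1.comp h3, fun g x => ?_⟩
    show f₁ (f₂ (g • x)) = g • f₁ (f₂ x)
    rw [h4, h2]

open Function Set

lemma Set.Finite.exists_disjoint_of_pairwise_disjoint {ι α : Type*} [Infinite ι] {s : Set α}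
    (hs : s.Finite) {t : ι → Set α} (ht : Pairwise (Disjoint on t)) : ∃ i, Disjoint (t i) s := by
  by_contra! h
  choose f hft hfs using fun i => not_disjoint_iff.1 (h i)
  have hf : Injective f := fun i j hij => by
    by_contra hne
    exact (ht hne).ne_of_mem (hft i) (hft j) hij
  exact infinite_of_injective_forall_mem hf hfs hs

lemma pairwise_disjoint_range_iterate_comp {α : Type*} {f g : α → α} (hg : Injective g)
    (hfg : Disjoint (range f) (range g)) :
    Pairwise (Disjoint on fun n : ℕ => range (g^[n] ∘ f)) := by
  refine (pairwise_disjoint_on _).2 fun m n hmn => ?_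
  obtain ⟨k, rfl⟩ := Nat.exists_eq_add_of_lt hmn
  have hsplit : g^[m + k + 1] ∘ f = g^[m] ∘ (g ∘ g^[k] ∘ f) := by
    rw [add_assoc, iterate_add, iterate_succ']
    rfl
  simp only [hsplit, range_comp]
  rw [disjoint_image_iff (hg.iterate m)]
  exact hfg.mono_right (image_subset_range _ _)

section InjGMonoid

variable {G U : Type*} [Group G] [MulAction G U]

lemma injGMonoid.injective (ψ : injGMonoid G U) : Injective ψ.val := ψ.2.1

lemma injGMonoid.map_smul (ψ : injGMonoid G U) (g : G) (x : U) : ψ.val (g • x) = g • ψ.val x :=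
  ψ.2.2 g x

lemma smul_mem_iff_of_forall_smul_mem {s : Set U} (hs : ∀ (g : G), ∀ x ∈ s, g • x ∈ s) (g : G)
    (x : U) : g • x ∈ s ↔ x ∈ s :=
  ⟨fun h => by simpa using hs g⁻¹ _ h, hs g x⟩

lemma injGMonoid.smul_mem_image {s : Set U} (ψ : injGMonoid G U)
    (hs : ∀ (g : G), ∀ x ∈ s, g • x ∈ s) : ∀ (g : G), ∀ y ∈ ψ.val '' s, g • y ∈ ψ.val '' s := by
  rintro g _ ⟨x, hx, rfl⟩
  exact ⟨g • x, hs g x hx, injGMonoid.map_smul ψ g x⟩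

lemma injGMonoid.smul_mem_range (ψ : injGMonoid G U) :
    ∀ (g : G), ∀ y ∈ range ψ.val, g • y ∈ range ψ.val := by
  rintro g _ ⟨x, rfl⟩
  exact ⟨g • x, injGMonoid.map_smul ψ g x⟩

lemma piecewise_mem_injGMonoid {s : Set U} [DecidablePred (· ∈ s)]
    (hs : ∀ (g : G), ∀ x ∈ s, g • x ∈ s) {f f' : U → U} (hinj : Injective (s.piecewise f f'))
    (hf : ∀ (g : G), ∀ x ∈ s, f (g • x) = g • f x)
    (hf' : ∀ (g : G), ∀ x ∉ s, f' (g • x) = g • f' x) :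
    (s.piecewise f f' : Function.End U) ∈ injGMonoid G U := by
  refine ⟨hinj, fun g x => ?_⟩
  by_cases hx : x ∈ s
  · simp only [piecewise_eq_of_mem _ _ _ hx, piecewise_eq_of_mem _ _ _ (hs g x hx), hf g x hx]
  · have hgx : g • x ∉ s := by rwa [smul_mem_iff_of_forall_smul_mem hs]
    simp only [piecewise_eq_of_notMem _ _ _ hx, piecewise_eq_of_notMem _ _ _ hgx, hf' g x hx]

lemma exists_fixing_mul_eq_mul_self {M₀ : Set U} (χ : injGMonoid G U)
    (hχ : Disjoint (range χ.val) M₀) :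
    ∃ μ : injGMonoid G U, (∀ x ∈ M₀, μ.val x = x) ∧ μ * χ = χ * χ := by
  classical
  have hμ : ((range χ.val).piecewise χ.val id : Function.End U) ∈ injGMonoid G U := by
    refine piecewise_mem_injGMonoid (injGMonoid.smul_mem_range χ) ?_
      (fun g x _ => injGMonoid.map_smul χ g x) (fun _ _ _ => rfl)
    refine (injective_piecewise_iff _).2 ⟨(injGMonoid.injective χ).injOn, injOn_id _, ?_⟩
    rintro _ _ y hy rfl
    exact hy (mem_range_self _)
  refine ⟨⟨_, hμ⟩, fun x hx => piecewise_eq_of_notMem _ _ _ (hχ.notMem_of_mem_right hx), ?_⟩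
  exact Subtype.ext (funext fun x => piecewise_eq_of_mem _ _ _ (mem_range_self x))

lemma exists_mul_eqOn_id [Nonempty U] {M₀ : Set U} (hM₀ : ∀ (g : G), ∀ x ∈ M₀, g • x ∈ M₀)
    (χ : injGMonoid G U) (hχ : Disjoint (range χ.val) M₀) :
    ∃ τ : injGMonoid G U, ∀ x ∈ M₀, (τ * χ).val x = x := by
  classical
  have hleft : ∀ x, invFun χ.val (χ.val x) = x := leftInverse_invFun (injGMonoid.injective χ)
  have hτ : ((χ.val '' M₀).piecewise (invFun χ.val) χ.val : Function.End U) ∈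
      injGMonoid G U := by
    refine piecewise_mem_injGMonoid (injGMonoid.smul_mem_image χ hM₀) ?_ ?_
      (fun g x _ => injGMonoid.map_smul χ g x)
    · refine (injective_piecewise_iff _).2 ⟨?_, (injGMonoid.injective χ).injOn, ?_⟩
      · rintro _ ⟨x, -, rfl⟩ _ ⟨y, -, rfl⟩ h
        rw [hleft, hleft] at h
        rw [h]
      · rintro _ ⟨x, hx, rfl⟩ y - h
        rw [hleft] at h
        exact hχ.ne_of_mem (mem_range_self y) hx h.symm
    · rintro g _ ⟨x, -, rfl⟩
      rw [← injGMonoid.map_smul, hleft, hleft]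
  exact ⟨⟨_, hτ⟩, fun x hx => (piecewise_eq_of_mem _ _ _ (mem_image_of_mem _ hx)).trans (hleft x)⟩

lemma smul_eq_self_of_disjoint_range [Nonempty U] {A : Type*} [MulAction (injGMonoid G U) A]
    {M₀ : Set U} (hM₀ : ∀ (g : G), ∀ x ∈ M₀, g • x ∈ M₀)
    (hfix : ∀ ψ : injGMonoid G U, (∀ x ∈ M₀, ψ.val x = x) → ∀ a : A, ψ • a = a)
    (χ : injGMonoid G U) (hχ : Disjoint (range χ.val) M₀) (a : A) : χ • a = a := by
  obtain ⟨μ, hμ, hμχ⟩ := exists_fixing_mul_eq_mul_self χ hχ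
  obtain ⟨τ, hτχ⟩ := exists_mul_eqOn_id hM₀ χ hχ
  have hidem : ∀ b : A, χ • χ • b = χ • b := fun b => by
    rw [← mul_smul, ← hμχ, mul_smul, hfix μ hμ]
  have hret : ∀ b : A, τ • χ • b = b := fun b => by
    rw [← mul_smul, hfix _ hτχ]
  calc χ • a = τ • χ • χ • a := (hret _).symm
    _ = τ • χ • a := by rw [hidem]
    _ = a := hret a

lemma IsGSetUniverse.exists_disjoint_range (huniv : IsGSetUniverse G U) :
    ∃ i₁ i₂ : injGMonoid G U, Disjoint (range i₁.val) (range i₂.val) := by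
  obtain ⟨-, -, e, he⟩ := huniv
  have hsymm : ∀ (g : G) (z : U ⊕ U),
      e.symm (Sum.map (g • ·) (g • ·) z) = g • e.symm z := fun g z =>
    e.symm_apply_eq.2 (by rw [he, e.apply_symm_apply])
  refine ⟨⟨fun x => e.symm (.inl x), e.symm.injective.comp Sum.inl_injective,
    fun g x => hsymm g (.inl x)⟩, ⟨fun x => e.symm (.inr x),
    e.symm.injective.comp Sum.inr_injective, fun g x => hsymm g (.inr x)⟩, ?_⟩
  refine disjoint_range_iff.2 fun x y h => ?_
  exact Sum.inl_ne_inr (e.symm.injective h)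

lemma IsGSetUniverse.exists_disjoint_range_of_finite (huniv : IsGSetUniverse G U) {s : Set U}
    (hs : s.Finite) : ∃ φ : injGMonoid G U, Disjoint (range φ.val) s := by
  obtain ⟨i₁, i₂, hi⟩ := huniv.exists_disjoint_range
  obtain ⟨n, hn⟩ := hs.exists_disjoint_of_pairwise_disjoint
    (pairwise_disjoint_range_iterate_comp (injGMonoid.injective i₂) hi)
  exact ⟨i₂ ^ n * i₁, hn⟩

lemma smul_eq_self_of_finite_uniform_filtration {A : Type*} [MulAction (injGMonoid G U) A]
    (huniv : IsGSetUniverse G U) {M₀ : Set U} (hfin : M₀.Finite)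
    (hM₀ : ∀ (g : G), ∀ x ∈ M₀, g • x ∈ M₀)
    (hfix : ∀ ψ : injGMonoid G U, (∀ x ∈ M₀, ψ.val x = x) → ∀ a : A, ψ • a = a)
    (ψ : injGMonoid G U) (a : A) : ψ • a = a := by
  have := huniv.2.1
  obtain ⟨φ, hφ⟩ := huniv.exists_disjoint_range_of_finite hfin
  have hφψ : Disjoint (range (φ * ψ).val) M₀ :=
    hφ.mono_left (range_comp_subset_range ψ.val φ.val)
  calc ψ • a = φ • ψ • a := (smul_eq_self_of_disjoint_range hM₀ hfix φ hφ _).symm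
    _ = a := by rw [← mul_smul, smul_eq_self_of_disjoint_range hM₀ hfix _ hφψ]

end InjGMonoid

lemma smul_eq_self_of_closure_eq_top {M A : Type*} [AddGroup A] [DistribSMul M A] {S : Set A}
    (hS : AddSubgroup.closure S = ⊤) (m : M)
    (hm : ∀ s ∈ S, m • s = s) (a : A) : m • a = a :=
  DFunLike.congr_fun
    (AddMonoidHom.eq_of_eqOn_dense hS (f := DistribSMul.toAddMonoidHom A m)
      (g := AddMonoidHom.id A) hm) a

/-- a tame module over the monoid of `G`-equivariant injective self-maps of
a `G`-set universe which is finitely generated as an abelian group has trivial action. -/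
theorem trivial_action_of_fg {G U A : Type*} [Group G] [MulAction G U]
    [AddCommGroup A] [DistribMulAction (↥(injGMonoid G U)) A]
    (huniv : IsGSetUniverse G U)
    (htame : ∀ a : A, ∃ M₀ : Set U, M₀.Finite ∧ (∀ (g : G), ∀ x ∈ M₀, g • x ∈ M₀) ∧
      ∀ ψ : injGMonoid G U, (∀ x ∈ M₀, ψ.val x = x) → ψ • a = a)
    (hfg : AddGroup.FG A) :
    ∀ (ψ : injGMonoid G U) (a : A), ψ • a = a := by
  obtain ⟨S, hS⟩ := AddGroup.fg_def.1 hfg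
  choose F hFfin hFstab hFfix using htame
  refine smul_eq_self_of_finite_uniform_filtration huniv (M₀ := ⋃ s ∈ S, F s)
    (S.finite_toSet.biUnion fun s _ => hFfin s) ?_ ?_
  · intro g x hx
    simp only [mem_iUnion₂] at hx ⊢
    obtain ⟨s, hs, hxs⟩ := hx
    exact ⟨s, hs, hFstab s g x hxs⟩
  · intro ψ hψ
    exact smul_eq_self_of_closure_eq_top hS ψ fun s hs =>
      hFfix s ψ fun x hx => hψ x (mem_biUnion hs hx)
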